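/- arXiv:2410.02398 — 6 statements merged into one kernel-verified Lean document; each statement's English description precedes it below -/
import Mathlib

section
/- The color code automorphism group G contains exactly 6 elements of cycle type [2,2,2] (three disjoint transpositions), and each of them exchanges the color set {r,g,b} with the flavor set {x,y,z}. -/
/-- Permutations of the six labels `{r,g,b,x,y,z}` (encoded as `0,...,5`) that fix the
flavor labels `x,y,z` (indices `3,4,5`) pointwise, hence permute the colors
`r,g,b` (indices `0,1,2`) arbitrarily. -/
def colorPerms : Set (Equiv.Perm (Fin 6)) := {g | ∀ i : Fin 6, 3 ≤ (i : ℕ) → g i = i}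

/-- Permutations fixing the color labels `r,g,b` (indices `0,1,2`) pointwise,
hence permuting the flavors `x,y,z` arbitrarily. -/
def flavorPerms : Set (Equiv.Perm (Fin 6)) := {g | ∀ i : Fin 6, (i : ℕ) < 3 → g i = i}

/-- The color-flavor swap `(r x)(g y)(b z)`. -/
def cfSwap : Equiv.Perm (Fin 6) := Equiv.swap 0 3 * Equiv.swap 1 4 * Equiv.swap 2 5

/-- The color code automorphism group: the subgroup of `S₆` generated by color
permutations, flavor permutations, and the color-flavor swap. -/
def ccAut : Subgroup (Equiv.Perm (Fin 6)) :=
  Subgroup.closure (colorPerms ∪ flavorPerms ∪ {cfSwap})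


/-! `ccAut` is the stabilizer of the partition `{{r,g,b}, {x,y,z}}`: a permutation preserving the
two blocks is a color permutation times a flavor permutation, and one exchanging them differs from
`(r x)(g y)(b z)` by a block-preserving one. An element of cycle type `[2,2,2]` is a
fixed-point-free involution. If it preserved the blocks it would restrict to an involution of the
three colors, which has a fixed point since `3` is odd; so it exchanges the blocks. Conversely every
involution exchanging the blocks is fixed-point-free and lies in `ccAut`, and there are `3! = 6` of
them, one for each bijection from colors to flavors. -/

open Equiv Finset

namespace Equiv.Perm

variable {α : Type*}

theorem card_support_eq_card_iff [Fintype α] [DecidableEq α] {σ : Perm α} :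
    #σ.support = Fintype.card α ↔ ∀ a, σ a ≠ a := by
  simp only [card_eq_iff_eq_univ, eq_univ_iff_forall, mem_support]

theorem cycleType_eq_replicate_two_iff [Fintype α] [DecidableEq α] {σ : Perm α} {k : ℕ} :
    σ.cycleType = Multiset.replicate k 2 ↔ σ ^ 2 = 1 ∧ #σ.support = 2 * k := by
  constructor
  · intro h
    refine ⟨pow_prime_eq_one_iff.mpr fun c hc => ?_, ?_⟩
    · rw [h] at hc
      exact Multiset.eq_of_mem_replicate hc
    · rw [← sum_cycleType, h, Multiset.sum_replicate, smul_eq_mul, mul_comm]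
  · rintro ⟨hσ, hcard⟩
    have h := cycleType_of_pow_prime_eq_one hσ
    have hsum := sum_cycleType σ
    rw [h, Multiset.sum_replicate, smul_eq_mul] at hsum
    rw [h]
    congr 1
    omega

theorem exists_mem_fixed_of_sq_eq_one {p : α → Prop} [Fintype {a // p a}]
    (hodd : Odd (Fintype.card {a // p a})) {σ : Perm α} (hσ : σ ^ 2 = 1)
    (hp : ∀ a, p (σ a) ↔ p a) : ∃ a, p a ∧ σ a = a := by
  obtain ⟨⟨a, ha⟩, hfix⟩ := exists_fixed_point_of_prime (p := 2) (n := 1)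
    hodd.not_two_dvd_nat (σ := σ.subtypePerm hp) (by ext x; simp [hσ])
  exact ⟨a, ha, congrArg Subtype.val hfix⟩

section BlockStabilizer

variable (p : α → Prop)

def blockStabilizer : Subgroup (Perm α) where
  carrier := {g | (∀ a, p (g a) ↔ p a) ∨ ∀ a, p (g a) ↔ ¬ p a}
  one_mem' := Or.inl fun _ => Iff.rfl
  mul_mem' := by
    rintro f g (hf | hf) (hg | hg) <;> [left; right; right; left] <;> intro a <;>
      simp only [mul_apply, hf, hg, not_not]
  inv_mem' := by
    rintro g (hg | hg) <;> [left; right] <;> intro a <;>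
      have := hg (g⁻¹ a) <;> simp only [coe_inv, apply_symm_apply] at this ⊢ <;> tauto

variable {p}

theorem apply_mem_iff_of_forall_imp_eq {f : Perm α} (hf : ∀ a, p a → f a = a) :
    ∀ a, p (f a) ↔ p a := by
  intro a
  by_cases ha : p a
  · rw [hf a ha]
  · refine iff_of_false (fun hfa => ?_) ha
    rw [f.injective (hf _ hfa)] at hfa
    exact ha hfa

theorem eq_ofSubtype_mul_ofSubtype [DecidablePred p] {g : Perm α} (hg : ∀ a, p (g a) ↔ p a) :
    g = ofSubtype (g.subtypePerm hg) *
      ofSubtype (g.subtypePerm (p := fun a => ¬ p a) fun a => not_congr (hg a)) := by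
  ext a
  by_cases ha : p a
  · rw [mul_apply, ofSubtype_apply_of_not_mem (p := fun a => ¬ p a) _ (not_not.mpr ha),
      ofSubtype_subtypePerm_of_mem _ ha]
  · rw [mul_apply, ofSubtype_subtypePerm_of_mem (p := fun a => ¬ p a) _ ha,
      ofSubtype_apply_of_not_mem _ ((hg a).not.mpr ha)]

theorem blockStabilizer_le [DecidablePred p] {H : Subgroup (Perm α)}
    (hfix_compl : ∀ f : Perm α, (∀ a, ¬ p a → f a = a) → f ∈ H)
    (hfix : ∀ f : Perm α, (∀ a, p a → f a = a) → f ∈ H)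
    {s : Perm α} (hs : ∀ a, p (s a) ↔ ¬ p a) (hsH : s ∈ H) : blockStabilizer p ≤ H := by
  have hpres : ∀ g : Perm α, (∀ a, p (g a) ↔ p a) → g ∈ H := fun g hg => by
    rw [eq_ofSubtype_mul_ofSubtype hg]
    exact mul_mem (hfix_compl _ fun a ha => ofSubtype_apply_of_not_mem _ ha)
      (hfix _ fun a ha => ofSubtype_apply_of_not_mem (p := fun a => ¬ p a) _ (not_not.mpr ha))
  rintro g (hg | hg)
  · exact hpres g hg
  · simpa using mul_mem (hpres (g * s) fun a => by simp only [mul_apply, hg, hs, not_not])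
      (inv_mem hsH)

end BlockStabilizer

end Equiv.Perm

open Equiv.Perm

abbrev IsColor (i : Fin 6) : Prop := (i : ℕ) < 3

theorem ccAut_eq_blockStabilizer : ccAut = blockStabilizer IsColor := by
  apply le_antisymm
  · rw [ccAut, Subgroup.closure_le]
    rintro g ((hg | hg) | rfl)
    · exact Or.inl fun i => by
        simpa only [not_le] using (apply_mem_iff_of_forall_imp_eq hg i).not
    · exact Or.inl (apply_mem_iff_of_forall_imp_eq hg)
    · exact Or.inr (by decide)
  · exact blockStabilizer_le
      (fun f hf => Subgroup.subset_closure (Or.inl (Or.inl fun i hi => hf i (not_lt.mpr hi))))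
      (fun f hf => Subgroup.subset_closure (Or.inl (Or.inr hf)))
      (by decide : ∀ i, IsColor (cfSwap i) ↔ ¬ IsColor i) (Subgroup.subset_closure (Or.inr rfl))

theorem isColor_apply_iff_of_mem_ccAut {g : Perm (Fin 6)} (hg : g ∈ ccAut) (hg2 : g ^ 2 = 1)
    (hfree : ∀ i, g i ≠ i) : ∀ i, IsColor (g i) ↔ ¬ IsColor i := by
  rw [ccAut_eq_blockStabilizer] at hg
  refine hg.resolve_left fun hpres => ?_
  obtain ⟨i, -, hi⟩ := exists_mem_fixed_of_sq_eq_one (by decide) hg2 hpres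
  exact hfree i hi

theorem mem_ccAut_and_cycleType_iff (g : Perm (Fin 6)) :
    g ∈ ccAut ∧ g.cycleType = {2, 2, 2} ↔ g ^ 2 = 1 ∧ ∀ i, IsColor (g i) ↔ ¬ IsColor i := by
  have h222 : g.cycleType = {2, 2, 2} ↔ g ^ 2 = 1 ∧ ∀ i, g i ≠ i := by
    rw [← card_support_eq_card_iff, Fintype.card_fin]
    exact cycleType_eq_replicate_two_iff (k := 3)
  rw [h222]
  constructor
  · rintro ⟨hg, hg2, hfree⟩
    exact ⟨hg2, isColor_apply_iff_of_mem_ccAut hg hg2 hfree⟩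
  · rintro ⟨hg2, hswap⟩
    exact ⟨ccAut_eq_blockStabilizer ▸ Or.inr hswap, hg2, fun i hi => iff_not_self (hi ▸ hswap i)⟩

set_option maxRecDepth 20000 in
theorem card_involutions_exchanging_colors :
    #{g : Perm (Fin 6) | g ^ 2 = 1 ∧ ∀ i, IsColor (g i) ↔ ¬ IsColor i} = 6 := by
  decide

/-- `G` contains exactly 6 elements of cycle type `[2,2,2]` (three disjoint transpositions,
no fixed points), and each of them exchanges the color set `{r,g,b}` with the flavor set
`{x,y,z}`. -/
theorem ccAut_cycleType_222 :
    {g : Equiv.Perm (Fin 6) | g ∈ ccAut ∧ g.cycleType = {2, 2, 2}}.ncard = 6 ∧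
      ∀ g ∈ ccAut, g.cycleType = {2, 2, 2} →
        ∀ i : Fin 6, (i : ℕ) < 3 ↔ ¬ ((g i : ℕ) < 3) := by
  refine ⟨?_, fun g hg hct i => ?_⟩
  · rw [Set.ext mem_ccAut_and_cycleType_iff, Set.ncard_eq_toFinset_card', Set.toFinset_ofPred,
      card_involutions_exchanging_colors]
  · have := ((mem_ccAut_and_cycleType_iff g).mp ⟨hg, hct⟩).2 i
    tauto
end

section
/- The set of elements of G of cycle type [2,2,2] forms a single conjugacy class of G of size 6. -/
/-!
Every element of `G` maps the colour block `{r,g,b}` either to itself or to the flavour block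
`{x,y,z}`. An element of cycle type `[2,2,2]` is a fixed-point-free involution, which cannot
preserve a block of odd size; so it swaps the two blocks, and a finite check over `S₆` shows that
it is then `σ (r x)(g y)(b z) σ⁻¹` for exactly one colour permutation `σ ∈ S₃`. These six elements
are exactly the conjugates of the colour-flavour swap inside `G`.
-/

open Equiv Equiv.Perm MulAction Pointwise

section PairCompl

variable {G α : Type*} [Group G] [MulAction G α]

theorem mem_stabilizer_pair_compl_iff {s : Set α} {g : G} :
    g ∈ stabilizer G ({s, sᶜ} : Set (Set α)) ↔ g • s = s ∨ g • s = sᶜ := by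
  rw [mem_stabilizer_iff, Set.smul_set_insert, Set.smul_set_singleton, Set.smul_set_compl,
    Set.pair_eq_pair_iff, compl_inj_iff, and_self, compl_eq_comm, eq_comm (a := sᶜ), and_self]

theorem stabilizer_le_stabilizer_pair_compl (s : Set α) :
    stabilizer G s ≤ stabilizer G ({s, sᶜ} : Set (Set α)) :=
  fun _ hg => mem_stabilizer_pair_compl_iff.mpr (Or.inl hg)

end PairCompl

theorem cycleType_eq_replicate_two_iff {α : Type*} [Fintype α] [DecidableEq α] {n : ℕ}
    (hα : Fintype.card α = 2 * n) {g : Perm α} :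
    g.cycleType = Multiset.replicate n 2 ↔ g * g = 1 ∧ ∀ x, g x ≠ x := by
  have hcard : g.support.card = g.cycleType.sum := (sum_cycleType g).symm
  constructor
  · intro h
    have horder : orderOf g ∣ 2 := by
      rw [← lcm_cycleType, h]
      exact Multiset.lcm_dvd.mpr fun b hb => (Multiset.eq_of_mem_replicate hb).symm ▸ dvd_rfl
    have hsupport : g.support = Finset.univ := by
      apply Finset.eq_univ_of_card
      rw [hcard, h, Multiset.sum_replicate, hα, smul_eq_mul, mul_comm]
    refine ⟨by rw [← sq, ← orderOf_dvd_iff_pow_eq_one]; exact horder, fun x => ?_⟩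
    exact mem_support.mp (hsupport ▸ Finset.mem_univ x)
  · rintro ⟨hinv, hfree⟩
    cases isEmpty_or_nonempty α with
    | inl hempty =>
      have hn : n = 0 := by simp at hα; omega
      rw [hn, Multiset.replicate_zero, cycleType_eq_zero]
      exact Subsingleton.elim _ _
    | inr hne =>
      obtain ⟨x⟩ := hne
      have horder : orderOf g = 2 :=
        orderOf_eq_prime (by rwa [sq]) fun h => hfree x (by rw [h, one_apply])
      obtain ⟨m, hm⟩ := cycleType_prime_order (horder ▸ Nat.prime_two)
      have hsupport : g.support = Finset.univ := by
        ext y; simpa using hfree y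
      rw [hsupport, Finset.card_univ, hα, hm, horder, Multiset.sum_replicate, smul_eq_mul]
        at hcard
      rw [hm, horder, show m + 1 = n by omega]

def colorLabels : Set (Fin 6) := {i | (i : ℕ) < 3}

theorem ccAut_le_stabilizer_colorLabels :
    ccAut ≤ stabilizer (Perm (Fin 6)) ({colorLabels, colorLabelsᶜ} : Set (Set (Fin 6))) := by
  rw [ccAut, Subgroup.closure_le]
  rintro g ((hg | hg) | rfl)
  · apply stabilizer_le_stabilizer_pair_compl
    rw [← stabilizer_compl]
    exact fixingSubgroup_le_stabilizer _ _ fun i => hg i (not_lt.mp i.2)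
  · exact stabilizer_le_stabilizer_pair_compl _ <|
      fixingSubgroup_le_stabilizer _ _ fun i => hg i i.2
  · refine mem_stabilizer_pair_compl_iff.mpr (Or.inr ?_)
    ext i
    rw [Set.mem_smul_set_iff_inv_smul_mem]
    revert i
    show ∀ i : Fin 6, ((cfSwap⁻¹ i : Fin 6) : ℕ) < 3 ↔ ¬(i : ℕ) < 3
    decide

theorem ccAut_apply_mem_colorLabels {g : Perm (Fin 6)} (hg : g ∈ ccAut) :
    (∀ i, g i ∈ colorLabels ↔ i ∈ colorLabels) ∨ (∀ i, g i ∈ colorLabelsᶜ ↔ i ∈ colorLabels) := by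
  rcases mem_stabilizer_pair_compl_iff.mp (ccAut_le_stabilizer_colorLabels hg) with h | h
  · exact Or.inl fun i => Iff.trans (by rw [h]; rfl) Set.smul_mem_smul_set_iff
  · exact Or.inr fun i => Iff.trans (by rw [h]; rfl) Set.smul_mem_smul_set_iff

def colorPerm (σ : Perm (Fin 3)) : Perm (Fin 6) :=
  (finSumFinEquiv (m := 3) (n := 3)).permCongr (σ.sumCongr 1)

theorem colorPerm_mem_ccAut (σ : Perm (Fin 3)) : colorPerm σ ∈ ccAut := by
  refine Subgroup.subset_closure (Or.inl (Or.inl ?_))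
  show ∀ i : Fin 6, 3 ≤ (i : ℕ) → colorPerm σ i = i
  revert σ
  decide

theorem cfSwap_mem_ccAut : cfSwap ∈ ccAut :=
  Subgroup.subset_closure (Or.inr rfl)

theorem cfSwap_cycleType : cfSwap.cycleType = {2, 2, 2} :=
  (cycleType_eq_replicate_two_iff (n := 3) rfl).mpr ⟨by decide, by decide⟩

def colorConjSwap (σ : Perm (Fin 3)) : Perm (Fin 6) := colorPerm σ * cfSwap * (colorPerm σ)⁻¹

theorem colorConjSwap_injective : Function.Injective colorConjSwap := by
  unfold Function.Injective
  decide

theorem colorConjSwap_mem_ccAut (σ : Perm (Fin 3)) : colorConjSwap σ ∈ ccAut :=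
  mul_mem (mul_mem (colorPerm_mem_ccAut σ) cfSwap_mem_ccAut) (inv_mem (colorPerm_mem_ccAut σ))

set_option maxRecDepth 10000 in
theorem exists_colorConjSwap_eq_of_fixedPointFree_involution :
    ∀ g : Perm (Fin 6), g * g = 1 → (∀ i, g i ≠ i) →
    ((∀ i, (g i : ℕ) < 3 ↔ (i : ℕ) < 3) ∨ (∀ i, ¬(g i : ℕ) < 3 ↔ (i : ℕ) < 3)) →
    ∃ σ, colorConjSwap σ = g := by
  decide

theorem cycleType_eq_222_iff {g : Perm (Fin 6)} (hg : g ∈ ccAut) :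
    g.cycleType = {2, 2, 2} ↔ ∃ σ, colorConjSwap σ = g := by
  constructor
  · intro h
    obtain ⟨hinv, hfree⟩ := (cycleType_eq_replicate_two_iff (n := 3) rfl).mp h
    exact exists_colorConjSwap_eq_of_fixedPointFree_involution g hinv hfree
      (ccAut_apply_mem_colorLabels hg)
  · rintro ⟨σ, rfl⟩
    rw [colorConjSwap, cycleType_conj, cfSwap_cycleType]

/-- The elements of `G` of cycle type `[2,2,2]` form a single conjugacy class of `G`,
of size 6. -/
theorem ccAut_cycleType_222_conjClass :
    (∃ a : ccAut, {b : ccAut | (b : Equiv.Perm (Fin 6)).cycleType = {2, 2, 2}}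
        = {b : ccAut | IsConj a b}) ∧
      {b : ccAut | (b : Equiv.Perm (Fin 6)).cycleType = {2, 2, 2}}.ncard = 6 := by
  set S := {b : ccAut | (b : Equiv.Perm (Fin 6)).cycleType = {2, 2, 2}}
  have hS : Subtype.val '' S = Set.range colorConjSwap := by
    ext g
    constructor
    · rintro ⟨b, hb, rfl⟩
      exact (cycleType_eq_222_iff b.2).mp hb
    · rintro ⟨σ, rfl⟩
      exact ⟨⟨_, colorConjSwap_mem_ccAut σ⟩,
        (cycleType_eq_222_iff (colorConjSwap_mem_ccAut σ)).mpr ⟨σ, rfl⟩, rfl⟩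
  refine ⟨⟨⟨cfSwap, cfSwap_mem_ccAut⟩, Set.ext fun b => ⟨fun hb => ?_, fun hb => ?_⟩⟩, ?_⟩
  · obtain ⟨σ, hσ⟩ := (cycleType_eq_222_iff b.2).mp hb
    exact isConj_iff.mpr ⟨⟨colorPerm σ, colorPerm_mem_ccAut σ⟩, Subtype.ext hσ⟩
  · rw [Set.mem_ofPred_eq, ← cfSwap_cycleType]
    exact (isConj_iff_cycleType_eq.mp (ccAut.subtype.map_isConj hb)).symm
  · rw [← Set.ncard_image_of_injective S Subtype.val_injective, hS,
      Set.ncard_range_of_injective colorConjSwap_injective, Nat.card_perm, Nat.card_fin]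
    rfl
end

section
/- The product of two distinct elements of G of cycle type [2,2,2] has cycle type [1,1,2,2] or [3,3]: if the two involutions correspond to perpendicular mirror lines the product is a product of two disjoint transpositions fixing two points, and if parallel it is a product of two disjoint 3-cycles. -/
/-! ### Auxiliary machinery -/

/-- The involution of `Fin 6` exchanging the color block `{0,1,2}` with the flavor
block `{3,4,5}` according to a permutation `f` of `Fin 3`. -/
def liftFun (f : Equiv.Perm (Fin 3)) : Fin 6 → Fin 6 := fun i =>
  if h : (i : ℕ) < 3 then ⟨(f ⟨(i : ℕ), h⟩ : ℕ) + 3, by omega⟩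
  else ⟨(f.symm ⟨(i : ℕ) - 3, by omega⟩ : ℕ), by omega⟩

lemma liftFun_invol (f : Equiv.Perm (Fin 3)) : ∀ i, liftFun f (liftFun f i) = i := by
  intro i
  by_cases h : (i : ℕ) < 3
  · simp [liftFun, h, Fin.ext_iff]
  · simp only [liftFun, dif_neg h]
    have h2 : ((f.symm ⟨(i : ℕ) - 3, by omega⟩ : Fin 3) : ℕ) < 3 := Fin.is_lt _
    simp only [dif_pos h2]
    apply Fin.ext
    simp
    omega

/-- `liftFun f` as a permutation. -/
def liftPerm (f : Equiv.Perm (Fin 3)) : Equiv.Perm (Fin 6) :=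
  ⟨liftFun f, liftFun f, liftFun_invol f, liftFun_invol f⟩

lemma liftPerm_invol (f : Equiv.Perm (Fin 3)) : ∀ i, liftPerm f (liftPerm f i) = i :=
  liftFun_invol f

def downFun (σ : Equiv.Perm (Fin 6)) : Fin 3 → Fin 3 :=
  fun i => ⟨(σ ⟨(i : ℕ), by omega⟩ : ℕ) % 3, by omega⟩

def upFun (σ : Equiv.Perm (Fin 6)) : Fin 3 → Fin 3 :=
  fun j => ⟨(σ ⟨(j : ℕ) + 3, by omega⟩ : ℕ) % 3, by omega⟩

/-- Two involutions that swap the color/flavor blocks and agree on colors are equal. -/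
lemma invol_ext (α β : Equiv.Perm (Fin 6)) (hα : ∀ i, α (α i) = i) (hβ : ∀ i, β (β i) = i)
    (hb : ∀ i : Fin 6, (i : ℕ) < 3 ↔ ¬ ((α i : ℕ) < 3))
    (hagree : ∀ i : Fin 6, (i : ℕ) < 3 → α i = β i) : α = β := by
  apply Equiv.ext
  intro i
  by_cases h : (i : ℕ) < 3
  · exact hagree i h
  · have hc : ((α i : Fin 6) : ℕ) < 3 := by
      by_contra hc
      have := (hb i).mpr hc
      omega
    have h1 : α (α i) = i := hα i
    have h2 : β (α i) = i := by rw [← hagree _ hc]; exact h1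
    calc α i = β (β (α i)) := (hβ _).symm
    _ = β i := by rw [h2]

/-- Every block-swapping involution of `Fin 6` is of the form `liftPerm f`. -/
lemma exists_lift (σ : Equiv.Perm (Fin 6)) (h2 : ∀ i, σ (σ i) = i)
    (hb : ∀ i : Fin 6, (i : ℕ) < 3 ↔ ¬ ((σ i : ℕ) < 3)) :
    ∃ f, σ = liftPerm f := by
  have hlt : ∀ i : Fin 6, (i : ℕ) < 3 → 3 ≤ ((σ i : Fin 6) : ℕ) := fun i hi =>
    not_lt.mp ((hb i).mp hi)
  have hge : ∀ i : Fin 6, 3 ≤ (i : ℕ) → ((σ i : Fin 6) : ℕ) < 3 := by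
    intro i hi
    by_contra hc
    have := (hb i).mpr hc
    omega
  have hli : ∀ i : Fin 3, upFun σ (downFun σ i) = i := by
    intro i
    apply Fin.ext
    simp only [downFun, upFun]
    have hb1 : 3 ≤ (σ ⟨(i : ℕ), by omega⟩ : ℕ) := hlt _ (by simp [i.is_lt])
    have e1 : (⟨(σ ⟨(i : ℕ), by omega⟩ : ℕ) % 3 + 3, by omega⟩ : Fin 6)
        = σ ⟨(i : ℕ), by omega⟩ := by
      apply Fin.ext
      simp only
      omega
    rw [e1, h2]
    simp only
    omega
  have hri : ∀ j : Fin 3, downFun σ (upFun σ j) = j := by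
    intro j
    apply Fin.ext
    simp only [downFun, upFun]
    have hb1 : (σ ⟨(j : ℕ) + 3, by omega⟩ : ℕ) < 3 := hge _ (by simp)
    have e1 : (⟨(σ ⟨(j : ℕ) + 3, by omega⟩ : ℕ) % 3, by omega⟩ : Fin 6)
        = σ ⟨(j : ℕ) + 3, by omega⟩ := by
      apply Fin.ext
      simp only
      omega
    rw [e1, h2]
    simp only
    omega
  refine ⟨⟨downFun σ, upFun σ, hli, hri⟩, ?_⟩
  apply invol_ext σ _ h2 (liftPerm_invol _) hb
  intro i h
  rw [show liftPerm _ i = liftFun _ i from rfl, liftFun, dif_pos h]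
  apply Fin.ext
  simp only [Equiv.coe_fn_mk, downFun]
  have e1 : (⟨((⟨(i : ℕ), h⟩ : Fin 3) : ℕ), by omega⟩ : Fin 6) = i := Fin.ext rfl
  rw [e1]
  have := hlt i h
  omega

set_option maxRecDepth 10000 in
/-- Brute-force verification of the block and order/support facts over all 36 pairs. -/
lemma liftPerm_key : ∀ f g : Equiv.Perm (Fin 3),
    (∀ i : Fin 6, (i : ℕ) < 3 ↔ (((liftPerm f * liftPerm g) i : ℕ) < 3)) ∧
    (liftPerm f * liftPerm g = 1 ∨
     ((liftPerm f * liftPerm g) ^ 2 = 1 ∧ (liftPerm f * liftPerm g).support.card = 4) ∨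
     ((liftPerm f * liftPerm g) ^ 3 = 1 ∧ (liftPerm f * liftPerm g).support.card = 6)) := by
  decide

/-- A permutation of prime order `n` with support of size `2 * n` has
cycle type `{n, n}`. -/
lemma cycleType_pair {α : Type*} [Fintype α] [DecidableEq α] (ρ : Equiv.Perm α) {n : ℕ}
    (hp : n.Prime) (hord : ρ ^ n = 1) (hcard : ρ.support.card = 2 * n) :
    ρ.cycleType = {n, n} := by
  have hall : ∀ m ∈ ρ.cycleType, m = n := by
    intro m hm
    have h1 : m ∣ n := by
      have h2 : m ∣ ρ.cycleType.lcm := Multiset.dvd_lcm hm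
      rw [Equiv.Perm.lcm_cycleType] at h2
      exact h2.trans (orderOf_dvd_of_pow_eq_one hord)
    have h3 := Equiv.Perm.two_le_of_mem_cycleType hm
    rcases (Nat.Prime.eq_one_or_self_of_dvd hp m h1) with h | h
    · omega
    · exact h
  have hrep := Multiset.eq_replicate_card.mpr hall
  have hsum := ρ.sum_cycleType
  rw [hcard, hrep, Multiset.sum_replicate, smul_eq_mul] at hsum
  have hn : 0 < n := hp.pos
  have hc2 : ρ.cycleType.card = 2 := by nlinarith [hsum]
  rw [hrep, hc2]
  rfl

/-- The product of two distinct cycle-type-`[2,2,2]` elements of `G` (each exchanging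
`{r,g,b}` with `{x,y,z}`) preserves the two sets and has cycle type `[1,1,2,2]`
(i.e. `{2,2}` without fixed points recorded) or `[3,3]`. -/
theorem ccAut_product_of_reflections :
    ∀ σ τ : Equiv.Perm (Fin 6), σ ∈ ccAut → τ ∈ ccAut → σ ≠ τ →
      σ.cycleType = {2, 2, 2} → τ.cycleType = {2, 2, 2} →
      (∀ i : Fin 6, (i : ℕ) < 3 ↔ ¬ ((σ i : ℕ) < 3)) →
      (∀ i : Fin 6, (i : ℕ) < 3 ↔ ¬ ((τ i : ℕ) < 3)) →
      (∀ i : Fin 6, (i : ℕ) < 3 ↔ (((σ * τ) i : ℕ) < 3)) ∧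
        ((σ * τ).cycleType = {2, 2} ∨ (σ * τ).cycleType = {3, 3}) := by
  intro σ τ _ _ hne hσc hτc hbσ hbτ
  have hσord : orderOf σ = 2 := by
    rw [← Equiv.Perm.lcm_cycleType, hσc]
    decide
  have hτord : orderOf τ = 2 := by
    rw [← Equiv.Perm.lcm_cycleType, hτc]
    decide
  have hσ2 : σ * σ = 1 := by
    have := pow_orderOf_eq_one σ
    rwa [hσord, sq] at this
  have hτ2 : τ * τ = 1 := by
    have := pow_orderOf_eq_one τ
    rwa [hτord, sq] at this
  have hσσ : ∀ i, σ (σ i) = i := by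
    intro i
    have : (σ * σ) i = (1 : Equiv.Perm (Fin 6)) i := by rw [hσ2]
    simpa using this
  have hττ : ∀ i, τ (τ i) = i := by
    intro i
    have : (τ * τ) i = (1 : Equiv.Perm (Fin 6)) i := by rw [hτ2]
    simpa using this
  obtain ⟨f, hf⟩ := exists_lift σ hσσ hbσ
  obtain ⟨g, hg⟩ := exists_lift τ hττ hbτ
  subst hf hg
  obtain ⟨hblock, hcase⟩ := liftPerm_key f g
  refine ⟨hblock, ?_⟩
  rcases hcase with h1 | ⟨h2, h4⟩ | ⟨h3, h6⟩
  · exfalso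
    apply hne
    have : liftPerm g * liftPerm g = 1 := hτ2
    calc liftPerm f = liftPerm f * (liftPerm g * liftPerm g) := by rw [this, mul_one]
    _ = (liftPerm f * liftPerm g) * liftPerm g := by rw [mul_assoc]
    _ = liftPerm g := by rw [h1, one_mul]
  · left
    exact cycleType_pair _ Nat.prime_two h2 (by omega)
  · right
    exact cycleType_pair _ Nat.prime_three h3 (by omega)
end

section
/- Every element of G of cycle type [2,2,2] has even S3×S3-parity, and every element of G of cycle type [3,3] that exchanges no labels between {r,g,b} and {x,y,z} has even S3×S3-parity; hence no sequence of multiplications by cycle-type-[2,2,2] elements can connect an element of G of odd S3×S3-parity to one of even S3×S3-parity. -/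
/-- The `S₃ × S₃`-parity of a permutation `g`: the sign of `g` itself if `g` preserves the
color set `{r,g,b}`, and otherwise the sign of `(r x)(g y)(b z) · g` (which then preserves
the color set, i.e. lies in `S₃ × S₃`). -/
def s3s3Parity (g : Equiv.Perm (Fin 6)) : ℤˣ :=
  if ∀ i : Fin 6, (i : ℕ) < 3 → ((g i : ℕ) < 3) then Equiv.Perm.sign g
  else Equiv.Perm.sign (cfSwap * g)

/-!
Every generator of `ccAut`, hence every element, either preserves the colour block `{r,g,b}` or
exchanges it with the flavour block, and on this block stabilizer `s3s3Parity` is multiplicative.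
An involution of `Fin 6` preserving the three-element colour block has a fixed point there, so a
fixed-point-free involution (cycle type `[2,2,2]`) must exchange the blocks; its parity is then
`-sign τ = 1`. A block-preserving element of cycle type `[3,3]` is even. Multiplying by
elements of parity `1` therefore never changes the parity.
-/

open Equiv Perm

theorem Equiv.Perm.exists_fixed_of_sq_eq_one {α : Type*} [Fintype α] {σ : Perm α}
    (hσ : σ ^ 2 = 1) {p : α → Prop} [Fintype {x // p x}] (hp : ∀ x, p (σ x) ↔ p x)
    (hodd : Odd (Fintype.card {x // p x})) : ∃ x, p x ∧ σ x = x := by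
  have hsq : σ.subtypePerm hp ^ 2 ^ 1 = 1 := by
    ext x
    simp [subtypePerm_pow, hσ]
  obtain ⟨⟨x, hx⟩, hfix⟩ := exists_fixed_point_of_prime hodd.not_two_dvd_nat hsq
  exact ⟨x, hx, congrArg Subtype.val hfix⟩

theorem Equiv.Perm.pred_apply_iff_of_fixes_compl {α : Type*} {g : Perm α} {p : α → Prop}
    (hg : ∀ x, ¬ p x → g x = x) (x : α) : p (g x) ↔ p x := by
  by_cases hx : p x
  · refine iff_of_true (by_contra fun hgx => ?_) hx
    exact hgx ((g.injective (hg _ hgx)).symm ▸ hx)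
  · rw [hg x hx]

def PreservesColors (g : Perm (Fin 6)) : Prop := ∀ i : Fin 6, (i : ℕ) < 3 ↔ (g i : ℕ) < 3

def SwapsColors (g : Perm (Fin 6)) : Prop := ∀ i : Fin 6, (i : ℕ) < 3 ↔ ¬ (g i : ℕ) < 3

namespace PreservesColors

theorem mul {g h : Perm (Fin 6)} (hg : PreservesColors g) (hh : PreservesColors h) :
    PreservesColors (g * h) :=
  fun i => (hh i).trans (hg (h i))

theorem mul_swapsColors {g h : Perm (Fin 6)} (hg : PreservesColors g) (hh : SwapsColors h) :
    SwapsColors (g * h) :=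
  fun i => (hh i).trans (not_congr (hg (h i)))

theorem inv {g : Perm (Fin 6)} (hg : PreservesColors g) : PreservesColors g⁻¹ :=
  fun i => by simpa using (hg (g⁻¹ i)).symm

end PreservesColors

namespace SwapsColors

theorem mul_preservesColors {g h : Perm (Fin 6)} (hg : SwapsColors g) (hh : PreservesColors h) :
    SwapsColors (g * h) :=
  fun i => (hh i).trans (hg (h i))

theorem mul {g h : Perm (Fin 6)} (hg : SwapsColors g) (hh : SwapsColors h) :
    PreservesColors (g * h) :=
  fun i => (hh i).trans ((not_congr (hg (h i))).trans not_not)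

theorem inv {g : Perm (Fin 6)} (hg : SwapsColors g) : SwapsColors g⁻¹ :=
  fun i => iff_not_comm.1 (by simpa using hg (g⁻¹ i))

end SwapsColors

theorem swapsColors_cfSwap : SwapsColors cfSwap := by
  unfold SwapsColors; decide

theorem preservesColors_of_mem_colorPerms {g : Perm (Fin 6)} (hg : g ∈ colorPerms) :
    PreservesColors g :=
  fun i => (pred_apply_iff_of_fixes_compl (fun j hj => hg j (not_lt.1 hj)) i).symm

theorem preservesColors_of_mem_flavorPerms {g : Perm (Fin 6)} (hg : g ∈ flavorPerms) :
    PreservesColors g :=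
  fun i => not_iff_not.1
    (pred_apply_iff_of_fixes_compl (p := fun j : Fin 6 => ¬ (j : ℕ) < 3)
      (fun j hj => hg j (not_not.1 hj)) i).symm

def colorBlockStabilizer : Subgroup (Perm (Fin 6)) where
  carrier := {g | PreservesColors g ∨ SwapsColors g}
  mul_mem' := by
    rintro g h (hg | hg) (hh | hh)
    exacts [.inl (hg.mul hh), .inr (hg.mul_swapsColors hh), .inr (hg.mul_preservesColors hh),
      .inl (hg.mul hh)]
  one_mem' := .inl fun _ => Iff.rfl
  inv_mem' := by
    rintro g (hg | hg)
    exacts [.inl hg.inv, .inr hg.inv]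

theorem ccAut_le_colorBlockStabilizer : ccAut ≤ colorBlockStabilizer :=
  Subgroup.closure_le _ |>.2 <| by
    rintro g ((hg | hg) | rfl)
    exacts [.inl (preservesColors_of_mem_colorPerms hg),
      .inl (preservesColors_of_mem_flavorPerms hg), .inr swapsColors_cfSwap]

theorem sign_cfSwap : sign cfSwap = -1 := by decide

theorem s3s3Parity_of_preservesColors {g : Perm (Fin 6)} (hg : PreservesColors g) :
    s3s3Parity g = sign g :=
  if_pos fun i => (hg i).1

theorem s3s3Parity_of_swapsColors {g : Perm (Fin 6)} (hg : SwapsColors g) :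
    s3s3Parity g = -sign g := by
  rw [s3s3Parity, if_neg fun h => (hg 0).1 (by decide) (h 0 (by decide)), map_mul, sign_cfSwap,
    neg_one_mul]

theorem s3s3Parity_mul {g h : Perm (Fin 6)} (hg : g ∈ colorBlockStabilizer)
    (hh : h ∈ colorBlockStabilizer) : s3s3Parity (g * h) = s3s3Parity g * s3s3Parity h := by
  rcases hg with hg | hg <;> rcases hh with hh | hh
  · rw [s3s3Parity_of_preservesColors (hg.mul hh), s3s3Parity_of_preservesColors hg,
      s3s3Parity_of_preservesColors hh, map_mul]
  · rw [s3s3Parity_of_swapsColors (hg.mul_swapsColors hh), s3s3Parity_of_preservesColors hg,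
      s3s3Parity_of_swapsColors hh, map_mul, mul_neg]
  · rw [s3s3Parity_of_swapsColors (hg.mul_preservesColors hh), s3s3Parity_of_swapsColors hg,
      s3s3Parity_of_preservesColors hh, map_mul, neg_mul]
  · rw [s3s3Parity_of_preservesColors (hg.mul hh), s3s3Parity_of_swapsColors hg,
      s3s3Parity_of_swapsColors hh, map_mul, neg_mul_neg]

def evenColorBlockStabilizer : Submonoid (Perm (Fin 6)) where
  carrier := {g | g ∈ colorBlockStabilizer ∧ s3s3Parity g = 1}
  mul_mem' := fun ⟨hg, pg⟩ ⟨hh, ph⟩ =>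
    ⟨mul_mem hg hh, by rw [s3s3Parity_mul hg hh, pg, ph, one_mul]⟩
  one_mem' := ⟨one_mem _, rfl⟩

theorem not_preservesColors_of_cycleType_eq {τ : Perm (Fin 6)} (hτ : τ.cycleType = {2, 2, 2}) :
    ¬ PreservesColors τ := by
  have hsq : τ ^ 2 = 1 := by
    rw [← orderOf_dvd_iff_pow_eq_one, ← lcm_cycleType, hτ]; decide
  have hfree : ∀ i, τ i ≠ i := by
    have : τ.support = Finset.univ := Finset.eq_univ_of_card _ (by rw [← sum_cycleType, hτ]; rfl)
    exact fun i => mem_support.1 (this ▸ Finset.mem_univ i)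
  intro hpres
  obtain ⟨i, -, hi⟩ := exists_fixed_of_sq_eq_one hsq (p := fun i : Fin 6 => (i : ℕ) < 3)
    (fun i => (hpres i).symm) (by decide)
  exact hfree i hi

theorem s3s3Parity_eq_one_of_cycleType_eq {τ : Perm (Fin 6)} (hτ : τ ∈ colorBlockStabilizer)
    (hc : τ.cycleType = {2, 2, 2}) : s3s3Parity τ = 1 := by
  have hswap : SwapsColors τ := hτ.resolve_left (not_preservesColors_of_cycleType_eq hc)
  rw [s3s3Parity_of_swapsColors hswap, sign_of_cycleType, hc]
  rfl

/-- Every cycle-type-`[2,2,2]` element of `G` has even `S₃×S₃`-parity; every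
cycle-type-`[3,3]` element of `G` that exchanges no labels between `{r,g,b}` and `{x,y,z}`
has even `S₃×S₃`-parity; hence no sequence of multiplications by cycle-type-`[2,2,2]`
elements of `G` can connect an element of odd `S₃×S₃`-parity to one of even parity. -/
theorem s3s3Parity_reflections_even :
    (∀ τ ∈ ccAut, τ.cycleType = {2, 2, 2} → s3s3Parity τ = 1) ∧
      (∀ τ ∈ ccAut, τ.cycleType = {3, 3} →
        (∀ i : Fin 6, (i : ℕ) < 3 ↔ ((τ i : ℕ) < 3)) → s3s3Parity τ = 1) ∧
      (∀ l : List (Equiv.Perm (Fin 6)),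
        (∀ x ∈ l, x ∈ ccAut ∧ x.cycleType = {2, 2, 2}) →
        ∀ φ ∈ ccAut, s3s3Parity φ = -1 → s3s3Parity (l.prod * φ) = -1) := by
  have reflection_even (τ) (hτ : τ ∈ ccAut) (hc : τ.cycleType = {2, 2, 2}) :
      τ ∈ evenColorBlockStabilizer :=
    ⟨ccAut_le_colorBlockStabilizer hτ,
      s3s3Parity_eq_one_of_cycleType_eq (ccAut_le_colorBlockStabilizer hτ) hc⟩
  refine ⟨fun τ hτ hc => (reflection_even τ hτ hc).2, fun τ _ hc hpres => ?_,
    fun l hl φ hφ hφodd => ?_⟩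
  · rw [s3s3Parity_of_preservesColors hpres, sign_of_cycleType, hc]
    rfl
  · have hprod : l.prod ∈ evenColorBlockStabilizer :=
      Submonoid.list_prod_mem _ fun x hx => reflection_even x (hl x hx).1 (hl x hx).2
    rw [s3s3Parity_mul hprod.1 (ccAut_le_colorBlockStabilizer hφ), hprod.2, hφodd, one_mul]
end

section
/- If two distinct elements τ1, τ2 of G of cycle type [2,2,2] satisfy that their product τ1τ2 has cycle type [3,3] (parallel mirror lines), then their localized fermions f1 and f2 lie in the same fermion group; if τ1τ2 has cycle type [1,1,2,2] (perpendicular mirror lines), then f1 and f2 lie in different fermion groups. -/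
/-- The anyon fusion group of the color code: `A = 𝔽₂⁴` with basis
`e 0 = rx`, `e 1 = rz`, `e 2 = bx`, `e 3 = bz`. -/
abbrev Anyon : Type := Fin 4 → ZMod 2

/-- The braiding pairing on `A`: `(rx, bz)` and `(bx, rz)` are dual pairs
(`θ(rx,bz) = θ(bx,rz) = 1`, all other basis pairings `0`). -/
def braid (a b : Anyon) : ZMod 2 :=
  a 0 * b 3 + a 3 * b 0 + a 1 * b 2 + a 2 * b 1

/-- The two-component vector attached to each of the six labels `r,g,b,x,y,z`:
`r,x ↦ (1,0)`, `g,y ↦ (1,1)`, `b,z ↦ (0,1)`. -/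
def labelVec : Fin 6 → Fin 2 → ZMod 2 := ![![1, 0], ![1, 1], ![0, 1], ![1, 0], ![1, 1], ![0, 1]]

def hiIdx : Fin 4 → Fin 2 := ![0, 0, 1, 1]
def loIdx : Fin 4 → Fin 2 := ![0, 1, 0, 1]

/-- The boson labelled by a color label and a flavor label (accepted in either order):
`gσ = rσ + bσ` and `cy = cx + cz` in terms of the basis `rx, rz, bx, bz` of `A`. -/
def boson (l₁ l₂ : Fin 6) : Anyon :=
  if (l₁ : ℕ) < 3 then fun k => labelVec l₁ (hiIdx k) * labelVec l₂ (loIdx k)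
  else fun k => labelVec l₂ (hiIdx k) * labelVec l₁ (loIdx k)

/-- The linear action induced on the anyon group `A` by a permutation of the six labels:
the basis bosons `rx, rz, bx, bz` are sent to the bosons with permuted labels, extended
linearly. -/
def inducedMap (φ : Equiv.Perm (Fin 6)) (a : Anyon) : Anyon :=
  a 0 • boson (φ 0) (φ 3) + a 1 • boson (φ 0) (φ 5) +
    a 2 • boson (φ 2) (φ 3) + a 3 • boson (φ 2) (φ 5)

/-- Basis anyons: `e 0 = rx`, `e 1 = rz`, `e 2 = bx`, `e 3 = bz`. -/
def e (i : Fin 4) : Anyon := Pi.single i 1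

/-- The nine nonzero bosons `cσ` of the color code. -/
def bosons : Set Anyon :=
  {e 0, e 1, e 2, e 3, e 0 + e 2, e 1 + e 3, e 0 + e 1, e 2 + e 3, e 0 + e 1 + e 2 + e 3}

/-- The six fermions: the nonzero elements of `A` that are not bosons. -/
def fermions : Set Anyon := {a | a ≠ 0 ∧ a ∉ bosons}

/-- The fermion group `F = {rx+gz, bx+rz, gx+bz}`. -/
def fermF : Set Anyon := {e 0 + e 1 + e 3, e 1 + e 2, e 0 + e 2 + e 3}

/-- The fermion group `F' = {rx+bz, gx+rz, rz+by-type}`: the remaining three fermions. -/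
def fermF' : Set Anyon := {e 0 + e 3, e 0 + e 1 + e 2, e 1 + e 2 + e 3}

/-! ### Auxiliary material -/

/-- The six block-swapping fixed-point-free involutions. -/
def q1 : Equiv.Perm (Fin 6) := Equiv.swap 0 3 * Equiv.swap 1 4 * Equiv.swap 2 5
def q2 : Equiv.Perm (Fin 6) := Equiv.swap 0 3 * Equiv.swap 1 5 * Equiv.swap 2 4
def q3 : Equiv.Perm (Fin 6) := Equiv.swap 0 4 * Equiv.swap 1 3 * Equiv.swap 2 5
def q4 : Equiv.Perm (Fin 6) := Equiv.swap 0 4 * Equiv.swap 1 5 * Equiv.swap 2 3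
def q5 : Equiv.Perm (Fin 6) := Equiv.swap 0 5 * Equiv.swap 1 3 * Equiv.swap 2 4
def q6 : Equiv.Perm (Fin 6) := Equiv.swap 0 5 * Equiv.swap 1 4 * Equiv.swap 2 3

/-- Invariant preserved by the generators of `ccAut`. -/
def blk (g : Equiv.Perm (Fin 6)) : Prop :=
  (∀ i : Fin 6, ((i : ℕ) < 3 → ((g i : Fin 6) : ℕ) < 3) ∧ (3 ≤ (i : ℕ) → 3 ≤ ((g i : Fin 6) : ℕ))) ∨
  (∀ i : Fin 6, ((i : ℕ) < 3 → 3 ≤ ((g i : Fin 6) : ℕ)) ∧ (3 ≤ (i : ℕ) → ((g i : Fin 6) : ℕ) < 3))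

lemma blk_of_mem_ccAut {τ : Equiv.Perm (Fin 6)} (h : τ ∈ ccAut) : blk τ := by
  induction h using Subgroup.closure_induction with
  | mem g hg =>
    rcases hg with (hg | hg) | hg
    · -- colorPerms
      left
      intro i
      constructor
      · intro hi
        by_contra hge
        push_neg at hge
        have h1 : g (g i) = g i := hg (g i) hge
        have h2 := g.injective h1
        rw [h2] at hge
        omega
      · intro hi
        rw [hg i hi]
        exact hi
    · -- flavorPerms
      left
      intro i
      constructor
      · intro hi
        rw [hg i hi]; exact hi
      · intro hi
        by_contra hlt
        push_neg at hlt
        have h1 : g (g i) = g i := hg (g i) hlt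
        have h2 := g.injective h1
        rw [h2] at hlt
        omega
    · -- cfSwap
      right
      subst hg
      decide
  | one => left; intro i; simp
  | mul a b _ _ ha hb =>
    have hab : ∀ i, (a * b) i = a (b i) := fun i => rfl
    rcases ha with ha | ha <;> rcases hb with hb | hb
    · left; intro i
      refine ⟨fun hi => ?_, fun hi => ?_⟩
      · rw [hab]; exact (ha (b i)).1 ((hb i).1 hi)
      · rw [hab]; exact (ha (b i)).2 ((hb i).2 hi)
    · right; intro i
      refine ⟨fun hi => ?_, fun hi => ?_⟩
      · rw [hab]; exact (ha (b i)).2 ((hb i).1 hi)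
      · rw [hab]; exact (ha (b i)).1 ((hb i).2 hi)
    · right; intro i
      refine ⟨fun hi => ?_, fun hi => ?_⟩
      · rw [hab]; exact (ha (b i)).1 ((hb i).1 hi)
      · rw [hab]; exact (ha (b i)).2 ((hb i).2 hi)
    · left; intro i
      refine ⟨fun hi => ?_, fun hi => ?_⟩
      · rw [hab]; exact (ha (b i)).2 ((hb i).1 hi)
      · rw [hab]; exact (ha (b i)).1 ((hb i).2 hi)
  | inv a _ ha =>
    have key : ∀ i, a (a⁻¹ i) = i := fun i => a.apply_symm_apply i
    rcases ha with ha | ha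
    · left; intro i
      refine ⟨fun hi => ?_, fun hi => ?_⟩
      · by_contra hge
        push_neg at hge
        have := (ha (a⁻¹ i)).2 hge
        rw [key] at this; omega
      · by_contra hlt
        push_neg at hlt
        have := (ha (a⁻¹ i)).1 hlt
        rw [key] at this; omega
    · right; intro i
      refine ⟨fun hi => ?_, fun hi => ?_⟩
      · by_contra hlt
        push_neg at hlt
        have := (ha (a⁻¹ i)).1 hlt
        rw [key] at this; omega
      · by_contra hge
        push_neg at hge
        have := (ha (a⁻¹ i)).2 hge
        rw [key] at this; omega

set_option maxRecDepth 100000 in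
lemma no_left (τ : Equiv.Perm (Fin 6)) (h : ∀ i : Fin 6, (i : ℕ) < 3 → ((τ i : Fin 6) : ℕ) < 3)
    (h2 : τ * τ = 1) (hnf : ∀ i, τ i ≠ i) : False := by
  revert h h2 hnf; revert τ; decide

set_option maxRecDepth 100000 in
lemma mem_six (τ : Equiv.Perm (Fin 6)) (h : ∀ i : Fin 6, (i : ℕ) < 3 → 3 ≤ ((τ i : Fin 6) : ℕ))
    (h2 : τ * τ = 1) :
    τ = q1 ∨ τ = q2 ∨ τ = q3 ∨ τ = q4 ∨ τ = q5 ∨ τ = q6 := by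
  revert h h2; revert τ; decide

/-- The localized fermion for each of the six reflections. -/
lemma loc1 : ∀ f : Anyon, f ≠ 0 → (∃ a : Anyon, f = a + inducedMap q1 a) → f = e 1 + e 2 := by decide
lemma loc2 : ∀ f : Anyon, f ≠ 0 → (∃ a : Anyon, f = a + inducedMap q2 a) → f = e 0 + e 1 + e 2 := by decide
lemma loc3 : ∀ f : Anyon, f ≠ 0 → (∃ a : Anyon, f = a + inducedMap q3 a) → f = e 1 + e 2 + e 3 := by decide
lemma loc4 : ∀ f : Anyon, f ≠ 0 → (∃ a : Anyon, f = a + inducedMap q4 a) → f = e 0 + e 2 + e 3 := by decide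
lemma loc5 : ∀ f : Anyon, f ≠ 0 → (∃ a : Anyon, f = a + inducedMap q5 a) → f = e 0 + e 1 + e 3 := by decide
lemma loc6 : ∀ f : Anyon, f ≠ 0 → (∃ a : Anyon, f = a + inducedMap q6 a) → f = e 0 + e 3 := by decide

lemma memF1 : e 1 + e 2 ∈ fermF := Or.inr (Or.inl rfl)
lemma memF4 : e 0 + e 2 + e 3 ∈ fermF := Or.inr (Or.inr rfl)
lemma memF5 : e 0 + e 1 + e 3 ∈ fermF := Or.inl rfl
lemma memF'2 : e 0 + e 1 + e 2 ∈ fermF' := Or.inr (Or.inl rfl)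
lemma memF'3 : e 1 + e 2 + e 3 ∈ fermF' := Or.inr (Or.inr rfl)
lemma memF'6 : e 0 + e 3 ∈ fermF' := Or.inl rfl

/-- For two distinct cycle-type-`[2,2,2]` elements `τ₁, τ₂` of `G`, with localized
fermions `f₁, f₂` (the unique nontrivial elements of the images of `id + inducedMap τᵢ`):
if `τ₁τ₂` has cycle type `[3,3]` (parallel mirror lines) then `f₁` and `f₂` lie in the
same fermion group, and if `τ₁τ₂` has cycle type `[1,1,2,2]` (perpendicular mirror lines)
then they lie in different fermion groups. -/
theorem reflections_localized_fermion_groups :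
    ∀ τ₁ τ₂ : Equiv.Perm (Fin 6), τ₁ ∈ ccAut → τ₂ ∈ ccAut → τ₁ ≠ τ₂ →
      τ₁.cycleType = {2, 2, 2} → τ₂.cycleType = {2, 2, 2} →
      ∀ f₁ f₂ : Anyon, f₁ ≠ 0 → f₂ ≠ 0 →
        (∃ a : Anyon, f₁ = a + inducedMap τ₁ a) →
        (∃ a : Anyon, f₂ = a + inducedMap τ₂ a) →
        ((τ₁ * τ₂).cycleType = {3, 3} →
          ((f₁ ∈ fermF ∧ f₂ ∈ fermF) ∨ (f₁ ∈ fermF' ∧ f₂ ∈ fermF'))) ∧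
        ((τ₁ * τ₂).cycleType = {2, 2} →
          ((f₁ ∈ fermF ∧ f₂ ∈ fermF') ∨ (f₁ ∈ fermF' ∧ f₂ ∈ fermF))) := by
  intro τ₁ τ₂ h1 h2 hne hc1 hc2 f₁ f₂ hf1 hf2 he1 he2
  -- τᵢ are involutions without fixed points
  have ord1 : orderOf τ₁ = 2 := by
    rw [← Equiv.Perm.lcm_cycleType, hc1]; decide
  have ord2 : orderOf τ₂ = 2 := by
    rw [← Equiv.Perm.lcm_cycleType, hc2]; decide
  have sq1 : τ₁ * τ₁ = 1 := by
    have := pow_orderOf_eq_one τ₁; rw [ord1, pow_two] at this; exact this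
  have sq2 : τ₂ * τ₂ = 1 := by
    have := pow_orderOf_eq_one τ₂; rw [ord2, pow_two] at this; exact this
  have nf1 : ∀ i, τ₁ i ≠ i := by
    have hcard : τ₁.support.card = 6 := by
      rw [← Equiv.Perm.sum_cycleType, hc1]; decide
    have huniv : τ₁.support = Finset.univ :=
      Finset.eq_univ_of_card _ (by simp [hcard])
    intro i
    have : i ∈ τ₁.support := huniv ▸ Finset.mem_univ i
    exact Equiv.Perm.mem_support.mp this
  have nf2 : ∀ i, τ₂ i ≠ i := by
    have hcard : τ₂.support.card = 6 := by
      rw [← Equiv.Perm.sum_cycleType, hc2]; decide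
    have huniv : τ₂.support = Finset.univ :=
      Finset.eq_univ_of_card _ (by simp [hcard])
    intro i
    have : i ∈ τ₂.support := huniv ▸ Finset.mem_univ i
    exact Equiv.Perm.mem_support.mp this
  -- each τᵢ is one of the six explicit reflections
  have d1 : τ₁ = q1 ∨ τ₁ = q2 ∨ τ₁ = q3 ∨ τ₁ = q4 ∨ τ₁ = q5 ∨ τ₁ = q6 := by
    rcases blk_of_mem_ccAut h1 with hb | hb
    · exact (no_left τ₁ (fun i hi => (hb i).1 hi) sq1 nf1).elim
    · exact mem_six τ₁ (fun i hi => (hb i).1 hi) sq1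
  have d2 : τ₂ = q1 ∨ τ₂ = q2 ∨ τ₂ = q3 ∨ τ₂ = q4 ∨ τ₂ = q5 ∨ τ₂ = q6 := by
    rcases blk_of_mem_ccAut h2 with hb | hb
    · exact (no_left τ₂ (fun i hi => (hb i).1 hi) sq2 nf2).elim
    · exact mem_six τ₂ (fun i hi => (hb i).1 hi) sq2
  constructor
  · intro hct
    have cube : (τ₁ * τ₂) ^ 3 = 1 := by
      have hord : orderOf (τ₁ * τ₂) = 3 := by
        rw [← Equiv.Perm.lcm_cycleType, hct]; decide
      rw [← hord]; exact pow_orderOf_eq_one _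
    rcases d1 with rfl | rfl | rfl | rfl | rfl | rfl
    · rcases d2 with rfl | rfl | rfl | rfl | rfl | rfl
      · exact absurd rfl hne
      · exact absurd cube (by decide)
      · exact absurd cube (by decide)
      · exact Or.inl ⟨loc1 f₁ hf1 he1 ▸ memF1, loc4 f₂ hf2 he2 ▸ memF4⟩
      · exact Or.inl ⟨loc1 f₁ hf1 he1 ▸ memF1, loc5 f₂ hf2 he2 ▸ memF5⟩
      · exact absurd cube (by decide)
    · rcases d2 with rfl | rfl | rfl | rfl | rfl | rfl
      · exact absurd cube (by decide)
      · exact absurd rfl hne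
      · exact Or.inr ⟨loc2 f₁ hf1 he1 ▸ memF'2, loc3 f₂ hf2 he2 ▸ memF'3⟩
      · exact absurd cube (by decide)
      · exact absurd cube (by decide)
      · exact Or.inr ⟨loc2 f₁ hf1 he1 ▸ memF'2, loc6 f₂ hf2 he2 ▸ memF'6⟩
    · rcases d2 with rfl | rfl | rfl | rfl | rfl | rfl
      · exact absurd cube (by decide)
      · exact Or.inr ⟨loc3 f₁ hf1 he1 ▸ memF'3, loc2 f₂ hf2 he2 ▸ memF'2⟩
      · exact absurd rfl hne
      · exact absurd cube (by decide)
      · exact absurd cube (by decide)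
      · exact Or.inr ⟨loc3 f₁ hf1 he1 ▸ memF'3, loc6 f₂ hf2 he2 ▸ memF'6⟩
    · rcases d2 with rfl | rfl | rfl | rfl | rfl | rfl
      · exact Or.inl ⟨loc4 f₁ hf1 he1 ▸ memF4, loc1 f₂ hf2 he2 ▸ memF1⟩
      · exact absurd cube (by decide)
      · exact absurd cube (by decide)
      · exact absurd rfl hne
      · exact Or.inl ⟨loc4 f₁ hf1 he1 ▸ memF4, loc5 f₂ hf2 he2 ▸ memF5⟩
      · exact absurd cube (by decide)
    · rcases d2 with rfl | rfl | rfl | rfl | rfl | rfl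
      · exact Or.inl ⟨loc5 f₁ hf1 he1 ▸ memF5, loc1 f₂ hf2 he2 ▸ memF1⟩
      · exact absurd cube (by decide)
      · exact absurd cube (by decide)
      · exact Or.inl ⟨loc5 f₁ hf1 he1 ▸ memF5, loc4 f₂ hf2 he2 ▸ memF4⟩
      · exact absurd rfl hne
      · exact absurd cube (by decide)
    · rcases d2 with rfl | rfl | rfl | rfl | rfl | rfl
      · exact absurd cube (by decide)
      · exact Or.inr ⟨loc6 f₁ hf1 he1 ▸ memF'6, loc2 f₂ hf2 he2 ▸ memF'2⟩
      · exact Or.inr ⟨loc6 f₁ hf1 he1 ▸ memF'6, loc3 f₂ hf2 he2 ▸ memF'3⟩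
      · exact absurd cube (by decide)
      · exact absurd cube (by decide)
      · exact absurd rfl hne
  · intro hct
    have square : (τ₁ * τ₂) ^ 2 = 1 := by
      have hord : orderOf (τ₁ * τ₂) = 2 := by
        rw [← Equiv.Perm.lcm_cycleType, hct]; decide
      rw [← hord]; exact pow_orderOf_eq_one _
    rcases d1 with rfl | rfl | rfl | rfl | rfl | rfl
    · rcases d2 with rfl | rfl | rfl | rfl | rfl | rfl
      · exact absurd rfl hne
      · exact Or.inl ⟨loc1 f₁ hf1 he1 ▸ memF1, loc2 f₂ hf2 he2 ▸ memF'2⟩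
      · exact Or.inl ⟨loc1 f₁ hf1 he1 ▸ memF1, loc3 f₂ hf2 he2 ▸ memF'3⟩
      · exact absurd square (by decide)
      · exact absurd square (by decide)
      · exact Or.inl ⟨loc1 f₁ hf1 he1 ▸ memF1, loc6 f₂ hf2 he2 ▸ memF'6⟩
    · rcases d2 with rfl | rfl | rfl | rfl | rfl | rfl
      · exact Or.inr ⟨loc2 f₁ hf1 he1 ▸ memF'2, loc1 f₂ hf2 he2 ▸ memF1⟩
      · exact absurd rfl hne
      · exact absurd square (by decide)
      · exact Or.inr ⟨loc2 f₁ hf1 he1 ▸ memF'2, loc4 f₂ hf2 he2 ▸ memF4⟩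
      · exact Or.inr ⟨loc2 f₁ hf1 he1 ▸ memF'2, loc5 f₂ hf2 he2 ▸ memF5⟩
      · exact absurd square (by decide)
    · rcases d2 with rfl | rfl | rfl | rfl | rfl | rfl
      · exact Or.inr ⟨loc3 f₁ hf1 he1 ▸ memF'3, loc1 f₂ hf2 he2 ▸ memF1⟩
      · exact absurd square (by decide)
      · exact absurd rfl hne
      · exact Or.inr ⟨loc3 f₁ hf1 he1 ▸ memF'3, loc4 f₂ hf2 he2 ▸ memF4⟩
      · exact Or.inr ⟨loc3 f₁ hf1 he1 ▸ memF'3, loc5 f₂ hf2 he2 ▸ memF5⟩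
      · exact absurd square (by decide)
    · rcases d2 with rfl | rfl | rfl | rfl | rfl | rfl
      · exact absurd square (by decide)
      · exact Or.inl ⟨loc4 f₁ hf1 he1 ▸ memF4, loc2 f₂ hf2 he2 ▸ memF'2⟩
      · exact Or.inl ⟨loc4 f₁ hf1 he1 ▸ memF4, loc3 f₂ hf2 he2 ▸ memF'3⟩
      · exact absurd rfl hne
      · exact absurd square (by decide)
      · exact Or.inl ⟨loc4 f₁ hf1 he1 ▸ memF4, loc6 f₂ hf2 he2 ▸ memF'6⟩
    · rcases d2 with rfl | rfl | rfl | rfl | rfl | rfl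
      · exact absurd square (by decide)
      · exact Or.inl ⟨loc5 f₁ hf1 he1 ▸ memF5, loc2 f₂ hf2 he2 ▸ memF'2⟩
      · exact Or.inl ⟨loc5 f₁ hf1 he1 ▸ memF5, loc3 f₂ hf2 he2 ▸ memF'3⟩
      · exact absurd square (by decide)
      · exact absurd rfl hne
      · exact Or.inl ⟨loc5 f₁ hf1 he1 ▸ memF5, loc6 f₂ hf2 he2 ▸ memF'6⟩
    · rcases d2 with rfl | rfl | rfl | rfl | rfl | rfl
      · exact Or.inr ⟨loc6 f₁ hf1 he1 ▸ memF'6, loc1 f₂ hf2 he2 ▸ memF1⟩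
      · exact absurd square (by decide)
      · exact absurd square (by decide)
      · exact Or.inr ⟨loc6 f₁ hf1 he1 ▸ memF'6, loc4 f₂ hf2 he2 ▸ memF4⟩
      · exact Or.inr ⟨loc6 f₁ hf1 he1 ▸ memF'6, loc5 f₂ hf2 he2 ▸ memF5⟩
      · exact absurd rfl hne
end

section
/- For each element τ of the color code automorphism group G acting on the anyon group A = F2^4, the order of the subgroup L_τ = im(id − τ) depends only on the conjugacy class of τ, and takes the values 2^0, 2^1, 2^2, 2^2, 2^3, 2^4, 2^2, 2^3, 2^4 on the nine conjugacy classes represented by id, (rx)(gy)(bz), (rgb)(xyz), (rg)(xy), (rxgybz), (rgb), (rg), (rxgy)(bz), (rgb)(xy) respectively. -/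
/-- The localization subgroup `L_τ = im(id − τ)` (written over `𝔽₂`, `id + τ`) of the
induced action of `τ` on the anyon group. -/
def Lset (τ : Equiv.Perm (Fin 6)) : Set Anyon := {b | ∃ a : Anyon, b = a + inducedMap τ a}

/-- The 3-cycle `(r g b)`. -/
def rgb : Equiv.Perm (Fin 6) := Equiv.swap 0 1 * Equiv.swap 1 2

/-- The 3-cycle `(x y z)`. -/
def xyz : Equiv.Perm (Fin 6) := Equiv.swap 3 4 * Equiv.swap 4 5

/-- The 6-cycle `(r x g y b z)`. -/
def rxgybz : Equiv.Perm (Fin 6) :=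
  Equiv.swap 0 3 * Equiv.swap 3 1 * Equiv.swap 1 4 * Equiv.swap 4 2 * Equiv.swap 2 5

/-- `(r x g y)(b z)`. -/
def rxgy_bz : Equiv.Perm (Fin 6) :=
  Equiv.swap 0 3 * Equiv.swap 3 1 * Equiv.swap 1 4 * Equiv.swap 2 5

/-! ### Auxiliary machinery -/

/-- A mixed pair of labels: one color, one flavor. -/
def Mp (l₁ l₂ : Fin 6) : Prop := ((l₁ : ℕ) < 3 ∧ 3 ≤ (l₂ : ℕ)) ∨ ((l₂ : ℕ) < 3 ∧ 3 ≤ (l₁ : ℕ))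

instance (l₁ l₂ : Fin 6) : Decidable (Mp l₁ l₂) := by unfold Mp; infer_instance

/-- The induced map, as a function of the six label images. -/
def imapV (v : Fin 6 → Fin 6) (a : Anyon) : Anyon :=
  a 0 • boson (v 0) (v 3) + a 1 • boson (v 0) (v 5) +
    a 2 • boson (v 2) (v 3) + a 3 • boson (v 2) (v 5)

/-- `v` sends bosons to the correspondingly relabelled bosons, and preserves mixedness. -/
def okF (v : Fin 6 → Fin 6) : Prop :=
  (∀ l₁ l₂, Mp l₁ l₂ → imapV v (boson l₁ l₂) = boson (v l₁) (v l₂)) ∧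
  (∀ l₁ l₂, Mp l₁ l₂ → Mp (v l₁) (v l₂))

instance (v : Fin 6 → Fin 6) : Decidable (okF v) := by unfold okF; infer_instance

lemma inducedMap_eq (φ : Equiv.Perm (Fin 6)) : inducedMap φ = imapV ⇑φ := rfl

lemma imapV_add (v : Fin 6 → Fin 6) (a b : Anyon) :
    imapV v (a + b) = imapV v a + imapV v b := by
  unfold imapV; simp only [Pi.add_apply, add_smul]; abel

lemma imapV_smul (v : Fin 6 → Fin 6) (c : ZMod 2) (a : Anyon) :
    imapV v (c • a) = c • imapV v a := by
  unfold imapV; simp only [Pi.smul_apply, smul_eq_mul, mul_smul, smul_add]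

lemma imapV_comp {f g : Fin 6 → Fin 6} (hf : okF f)
    (hg2 : ∀ l₁ l₂, Mp l₁ l₂ → Mp (g l₁) (g l₂)) (a : Anyon) :
    imapV (f ∘ g) a = imapV f (imapV g a) := by
  conv_rhs => rw [show imapV g a = a 0 • boson (g 0) (g 3) + a 1 • boson (g 0) (g 5) +
    a 2 • boson (g 2) (g 3) + a 3 • boson (g 2) (g 5) from rfl]
  rw [imapV_add, imapV_add, imapV_add, imapV_smul, imapV_smul, imapV_smul, imapV_smul,
    hf.1 _ _ (hg2 0 3 (by decide)), hf.1 _ _ (hg2 0 5 (by decide)),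
    hf.1 _ _ (hg2 2 3 (by decide)), hf.1 _ _ (hg2 2 5 (by decide))]
  rfl

lemma okF_comp {f g : Fin 6 → Fin 6} (hf : okF f) (hg : okF g) : okF (f ∘ g) := by
  constructor
  · intro l₁ l₂ hm
    rw [imapV_comp hf hg.2, hg.1 l₁ l₂ hm, hf.1 _ _ (hg.2 l₁ l₂ hm)]; rfl
  · intro l₁ l₂ hm
    exact hf.2 _ _ (hg.2 _ _ hm)

/-- The subgroup of `S₆` of permutations acting compatibly on bosons. -/
def Hgrp : Subgroup (Equiv.Perm (Fin 6)) where
  carrier := {φ | okF ⇑φ}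
  one_mem' := by show okF ⇑(1 : Equiv.Perm (Fin 6)); decide
  mul_mem' := by
    intro a b ha hb
    show okF ⇑(a * b)
    rw [Equiv.Perm.coe_mul]
    exact okF_comp ha hb
  inv_mem' := by
    intro a ha
    have hpow : ∀ n : ℕ, okF ⇑(a ^ n) := by
      intro n
      induction n with
      | zero => show okF ⇑(1 : Equiv.Perm (Fin 6)); decide
      | succ n ih =>
        have : a ^ (n + 1) = a ^ n * a := pow_succ a n
        rw [this, Equiv.Perm.coe_mul]
        exact okF_comp ih ha
    have h1 : a⁻¹ = a ^ (orderOf a - 1) := by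
      have hpos : 0 < orderOf a := orderOf_pos a
      have hmul : a * a ^ (orderOf a - 1) = 1 := by
        rw [← pow_succ', Nat.sub_add_cancel hpos]
        exact pow_orderOf_eq_one a
      exact (inv_eq_of_mul_eq_one_right hmul)
    show okF ⇑(a⁻¹)
    rw [h1]; exact hpow _

lemma mem_of_vals (φ : Equiv.Perm (Fin 6)) (v0 v1 v2 v3 v4 v5 : Fin 6)
    (h0 : φ 0 = v0) (h1 : φ 1 = v1) (h2 : φ 2 = v2)
    (h3 : φ 3 = v3) (h4 : φ 4 = v4) (h5 : φ 5 = v5)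
    (hok : okF ![v0, v1, v2, v3, v4, v5]) : okF ⇑φ := by
  have hv : ⇑φ = ![v0, v1, v2, v3, v4, v5] := by
    funext i
    fin_cases i
    · exact h0
    · exact h1
    · exact h2
    · exact h3
    · exact h4
    · exact h5
  rw [hv]; exact hok

lemma gens_subset : colorPerms ∪ flavorPerms ∪ {cfSwap} ⊆ (Hgrp : Set (Equiv.Perm (Fin 6))) := by
  intro φ hφ
  have key : ∀ x : Fin 6, x ≠ 3 → x ≠ 4 → x ≠ 5 → x = 0 ∨ x = 1 ∨ x = 2 := by decide
  have key' : ∀ x : Fin 6, x ≠ 0 → x ≠ 1 → x ≠ 2 → x = 3 ∨ x = 4 ∨ x = 5 := by decide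
  rcases hφ with (hc | hf) | he
  · -- color permutations
    have h3 : φ 3 = 3 := hc 3 (by decide)
    have h4 : φ 4 = 4 := hc 4 (by decide)
    have h5 : φ 5 = 5 := hc 5 (by decide)
    have mk : ∀ j : Fin 6, (hj : φ j = j) → ∀ i : Fin 6, i ≠ j → φ i ≠ j := by
      intro j hj i hij e
      exact hij (φ.injective (e.trans hj.symm))
    have h0 : φ 0 = 0 ∨ φ 0 = 1 ∨ φ 0 = 2 :=
      key _ (mk 3 h3 0 (by decide)) (mk 4 h4 0 (by decide)) (mk 5 h5 0 (by decide))
    have h1 : φ 1 = 0 ∨ φ 1 = 1 ∨ φ 1 = 2 :=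
      key _ (mk 3 h3 1 (by decide)) (mk 4 h4 1 (by decide)) (mk 5 h5 1 (by decide))
    have h2 : φ 2 = 0 ∨ φ 2 = 1 ∨ φ 2 = 2 :=
      key _ (mk 3 h3 2 (by decide)) (mk 4 h4 2 (by decide)) (mk 5 h5 2 (by decide))
    show okF ⇑φ
    rcases h0 with e0 | e0 | e0 <;> rcases h1 with e1 | e1 | e1 <;> rcases h2 with e2 | e2 | e2 <;>
      first
      | exact absurd (φ.injective (e0.trans e1.symm)) (by decide)
      | exact absurd (φ.injective (e0.trans e2.symm)) (by decide)
      | exact absurd (φ.injective (e1.trans e2.symm)) (by decide)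
      | exact mem_of_vals φ _ _ _ _ _ _ e0 e1 e2 h3 h4 h5 (by decide)
  · -- flavor permutations
    have h0 : φ 0 = 0 := hf 0 (by decide)
    have h1 : φ 1 = 1 := hf 1 (by decide)
    have h2 : φ 2 = 2 := hf 2 (by decide)
    have mk : ∀ j : Fin 6, (hj : φ j = j) → ∀ i : Fin 6, i ≠ j → φ i ≠ j := by
      intro j hj i hij e
      exact hij (φ.injective (e.trans hj.symm))
    have h3 : φ 3 = 3 ∨ φ 3 = 4 ∨ φ 3 = 5 :=
      key' _ (mk 0 h0 3 (by decide)) (mk 1 h1 3 (by decide)) (mk 2 h2 3 (by decide))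
    have h4 : φ 4 = 3 ∨ φ 4 = 4 ∨ φ 4 = 5 :=
      key' _ (mk 0 h0 4 (by decide)) (mk 1 h1 4 (by decide)) (mk 2 h2 4 (by decide))
    have h5 : φ 5 = 3 ∨ φ 5 = 4 ∨ φ 5 = 5 :=
      key' _ (mk 0 h0 5 (by decide)) (mk 1 h1 5 (by decide)) (mk 2 h2 5 (by decide))
    show okF ⇑φ
    rcases h3 with e3 | e3 | e3 <;> rcases h4 with e4 | e4 | e4 <;> rcases h5 with e5 | e5 | e5 <;>
      first
      | exact absurd (φ.injective (e3.trans e4.symm)) (by decide)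
      | exact absurd (φ.injective (e3.trans e5.symm)) (by decide)
      | exact absurd (φ.injective (e4.trans e5.symm)) (by decide)
      | exact mem_of_vals φ _ _ _ _ _ _ h0 h1 h2 e3 e4 e5 (by decide)
  · -- cfSwap
    have : φ = cfSwap := he
    subst this
    show okF ⇑cfSwap
    decide

lemma ccAut_le_Hgrp : ccAut ≤ Hgrp := (Subgroup.closure_le Hgrp).2 gens_subset

lemma inducedMap_mul {φ ψ : Equiv.Perm (Fin 6)} (hφ : okF ⇑φ) (hψ : okF ⇑ψ) (a : Anyon) :
    inducedMap (φ * ψ) a = inducedMap φ (inducedMap ψ a) := by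
  rw [inducedMap_eq, inducedMap_eq, inducedMap_eq, Equiv.Perm.coe_mul]
  exact imapV_comp hφ hψ.2 a

lemma inducedMap_one (a : Anyon) : inducedMap 1 a = a := by revert a; decide

lemma inducedMap_add (φ : Equiv.Perm (Fin 6)) (a b : Anyon) :
    inducedMap φ (a + b) = inducedMap φ a + inducedMap φ b := by
  rw [inducedMap_eq]; exact imapV_add _ a b

lemma Lset_eq_image (σ : Equiv.Perm (Fin 6)) :
    Lset σ = ↑(Finset.image (fun a : Anyon => a + inducedMap σ a) Finset.univ) := by
  ext b
  simp only [Lset, Set.mem_setOf_eq, Finset.coe_image, Finset.coe_univ, Set.image_univ,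
    Set.mem_range, eq_comm]

/-- The order `|L_τ|` of the localization subgroup depends only on the conjugacy class of
`τ` in `G`, and takes the values `2⁰,2¹,2²,2²,2³,2⁴,2²,2³,2⁴` on the nine conjugacy
classes represented by `id`, `(rx)(gy)(bz)`, `(rgb)(xyz)`, `(rg)(xy)`, `(rxgybz)`,
`(rgb)`, `(rg)`, `(rxgy)(bz)`, `(rgb)(xy)` respectively. -/
theorem Lset_card_class_function :
    (∀ σ g : Equiv.Perm (Fin 6), σ ∈ ccAut → g ∈ ccAut →
        (Lset (g * σ * g⁻¹)).ncard = (Lset σ).ncard) ∧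
      (Lset 1).ncard = 2 ^ 0 ∧
      (Lset cfSwap).ncard = 2 ^ 1 ∧
      (Lset (rgb * xyz)).ncard = 2 ^ 2 ∧
      (Lset (Equiv.swap 0 1 * Equiv.swap 3 4)).ncard = 2 ^ 2 ∧
      (Lset rxgybz).ncard = 2 ^ 3 ∧
      (Lset rgb).ncard = 2 ^ 4 ∧
      (Lset (Equiv.swap 0 1)).ncard = 2 ^ 2 ∧
      (Lset rxgy_bz).ncard = 2 ^ 3 ∧
      (Lset (rgb * Equiv.swap 3 4)).ncard = 2 ^ 4 := by
  refine ⟨?_, ?_, ?_, ?_, ?_, ?_, ?_, ?_, ?_, ?_⟩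
  · intro σ g hσ hg
    have hσ' : okF ⇑σ := ccAut_le_Hgrp hσ
    have hg' : okF ⇑g := ccAut_le_Hgrp hg
    have hgi' : okF ⇑g⁻¹ := ccAut_le_Hgrp (inv_mem hg)
    have hgσ' : okF ⇑(g * σ) := ccAut_le_Hgrp (mul_mem hg hσ)
    have hconj : ∀ a, inducedMap (g * σ * g⁻¹) a =
        inducedMap g (inducedMap σ (inducedMap g⁻¹ a)) := by
      intro a
      rw [inducedMap_mul hgσ' hgi', inducedMap_mul hg' hσ']
    have hinv1 : ∀ a, inducedMap g (inducedMap g⁻¹ a) = a := by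
      intro a
      rw [← inducedMap_mul hg' hgi', mul_inv_cancel, inducedMap_one]
    have hinv2 : ∀ a, inducedMap g⁻¹ (inducedMap g a) = a := by
      intro a
      rw [← inducedMap_mul hgi' hg', inv_mul_cancel, inducedMap_one]
    have himg : Lset (g * σ * g⁻¹) = inducedMap g '' Lset σ := by
      ext b
      constructor
      · rintro ⟨a, rfl⟩
        refine ⟨inducedMap g⁻¹ a + inducedMap σ (inducedMap g⁻¹ a), ⟨_, rfl⟩, ?_⟩
        rw [inducedMap_add, hinv1, hconj]
      · rintro ⟨c', ⟨c, rfl⟩, rfl⟩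
        exact ⟨inducedMap g c, by rw [inducedMap_add, hconj, hinv2]⟩
    rw [himg, Set.ncard_image_of_injective _ (Function.LeftInverse.injective hinv2)]
  all_goals rw [Lset_eq_image, Set.ncard_coe_finset]
  · decide
  · decide
  · decide
  · decide
  · decide
  · decide
  · decide
  · decide
  · decide
end
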